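/- Let V be a real inner product space, let F : ι → V assign fairness attribute vectors to objects, let S be a finite set (finset) of objects of cardinality s ≥ 1 (the top-k selection), let c ∈ V be the fixed centroid of the whole population, and let D = (1/s)·∑_{i∈S} F(i) − c be the disparity of S. Suppose q ∈ S, p ∉ S, and replacing q by p strictly decreases the norm of the disparity, i.e. ‖(1/s)·∑_{i ∈ insert p (S.erase q)} F(i) − c‖ < ‖D‖. Then for any learning rate L > 0 and any bonus vector B ∈ V, the Full DCA update B ↦ B − L·D allocates strictly more additional bonus points to p than to q: ⟨B − L·D, F(p)⟩ − ⟨B, F(p)⟩ > ⟨B − L·D, F(q)⟩ − ⟨B, F(q)⟩. -/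
import Mathlib

open Finset RealInnerProductSpace

/-- **Full DCA favors disparity-reducing swaps.**
If replacing `q ∈ S` by `p ∉ S` strictly decreases the norm of the disparity
`D = (1/s) • ∑_{i∈S} F i - c`, then the Full DCA update `B ↦ B - L • D`
gives strictly more additional bonus points to `p` than to `q`. -/
theorem full_dca_allocates_more_bonus_to_swap_in
    {V : Type*} [NormedAddCommGroup V] [InnerProductSpace ℝ V]
    {ι : Type*} [DecidableEq ι] (F : ι → V) (S : Finset ι) (c : V)
    (hs : 1 ≤ S.card) {p q : ι} (hq : q ∈ S) (hp : p ∉ S)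
    (D : V) (hD : D = ((1 : ℝ) / (S.card : ℝ)) • (∑ i ∈ S, F i) - c)
    (hswap :
      ‖((1 : ℝ) / (S.card : ℝ)) • (∑ i ∈ insert p (S.erase q), F i) - c‖ < ‖D‖)
    (L : ℝ) (hL : 0 < L) (B : V) :
    ⟪B - L • D, F p⟫ - ⟪B, F p⟫ > ⟪B - L • D, F q⟫ - ⟪B, F q⟫ := by
  have hs0 : (0:ℝ) < S.card := by exact_mod_cast hs
  set t : ℝ := (1 : ℝ) / (S.card : ℝ) with htdef
  have ht : 0 < t := by positivity
  have hsum : ∑ i ∈ insert p (S.erase q), F i = (∑ i ∈ S, F i) + (F p - F q) := by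
    rw [Finset.sum_insert (fun h => hp (Finset.mem_of_mem_erase h)),
      Finset.sum_erase_eq_sub hq]
    abel
  have hD' : t • (∑ i ∈ insert p (S.erase q), F i) - c = D + t • (F p - F q) := by
    rw [hsum, smul_add, hD]
    abel
  rw [hD'] at hswap
  have h1 : ‖D + t • (F p - F q)‖ ^ 2 < ‖D‖ ^ 2 :=
    pow_lt_pow_left₀ hswap (norm_nonneg _) two_ne_zero
  have h2 : ‖D + t • (F p - F q)‖ ^ 2
      = ‖D‖ ^ 2 + 2 * ⟪D, t • (F p - F q)⟫ + ‖t • (F p - F q)‖ ^ 2 :=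
    norm_add_sq_real _ _
  have h3 : ⟪D, t • (F p - F q)⟫ = t * ⟪D, F p - F q⟫ :=
    real_inner_smul_right _ _ _
  have hinner : ⟪D, F p - F q⟫ < 0 := by
    nlinarith [sq_nonneg ‖t • (F p - F q)‖]
  have hsub : ⟪D, F p - F q⟫ = ⟪D, F p⟫ - ⟪D, F q⟫ := inner_sub_right _ _ _
  simp only [inner_sub_left, real_inner_smul_left]
  nlinarith
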